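/- For every integer n ≥ 2 and all i, j ∈ {1, …, n−1}, the number of non-primitive Dyck paths of semilength n whose last peak has height j+1 and whose first peak has height at least i equals the number of Dyck paths of semilength n whose last peak has height i+j+1 (this number being zero when i+j+1 > n). -/

import Mathlib

/-- A Dyck word: a list of booleans (`true` = rise, `false` = fall) with equally many
rises and falls such that every prefix has at least as many rises as falls. -/
def IsDyckWord (w : List Bool) : Prop :=
  w.count true = w.count false ∧ ∀ p, p <+: w → p.count false ≤ p.count true

/-- The list of heights of the peaks (occurrences of the factor `rf`) of a word,
from left to right. The height of a peak is the number of rises minus the number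
of falls in the prefix ending with the rise of that peak. -/
def peakHeights (w : List Bool) : List ℕ :=
  (List.range w.length).filterMap (fun k =>
    if w[k]? = some true ∧ w[k + 1]? = some false then
      some ((w.take (k + 1)).count true - (w.take (k + 1)).count false)
    else none)

/-- `DyckD n i j` is the set of Dyck paths of semilength `n` whose first peak has
height `i` and whose last peak has height `j`. -/
def DyckD (n i j : ℕ) : Set (List Bool) :=
  {w | IsDyckWord w ∧ w.count true = n ∧
    (peakHeights w).head? = some i ∧ (peakHeights w).getLast? = some j}
/-- A Dyck word is primitive if every proper nonempty prefix has strictly more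
rises than falls, i.e. the path touches the x-axis only at its endpoints. -/
def IsPrimitiveWord (w : List Bool) : Prop :=
  ∀ p, p <+: w → p ≠ [] → p ≠ w → p.count false < p.count true

/-!
Deleting the final run `r fᴷ` of a Dyck path whose last peak has height `K` leaves a word `u`
whose prefixes have nonnegative height and whose own height is `K - 1`; the first peak has height
at least `i` iff `u` starts with `rⁱ`, and the path is non-primitive iff `u` returns to the axis.
Write such a `u` as `rⁱ A B`, where `A` ends at the last return of `u` to the axis. Then
`rⁱ A B ↦ (reflect A) B`, where `reflect` reverses a word and swaps `r` with `f`, raises the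
height of `u` by `i` and keeps all prefix heights nonnegative. It is inverted by cutting
`w = A B` at the last position where `w` has height `i` and sending it to `rⁱ (reflect A) B`.
-/

namespace DyckPath

open List

def height (w : List Bool) : ℤ := w.count true - w.count false

@[simp] lemma height_nil : height [] = 0 := by simp [height]

@[simp] lemma height_append (u v : List Bool) : height (u ++ v) = height u + height v := by
  simp only [height, count_append]; push_cast; ring

@[simp] lemma height_replicate_true (n : ℕ) : height (replicate n true) = n := by
  simp [height, count_replicate]

@[simp] lemma height_replicate_false (n : ℕ) : height (replicate n false) = -n := by
  simp [height, count_replicate]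

@[simp] lemma height_cons_true (w : List Bool) : height (true :: w) = height w + 1 := by
  simp only [height, count_cons_self, count_cons_of_ne Bool.false_ne_true.symm]
  push_cast
  ring

lemma height_take_add_one_le (w : List Bool) (m : ℕ) :
    height (w.take (m + 1)) ≤ height (w.take m) + 1 := by
  rw [take_add_one, height_append]
  rcases w[m]? with _ | _ | _ <;> simp [height]

lemma height_take_append (u v : List Bool) (m : ℕ) :
    height ((u ++ v).take m) = height (u.take m) + height (v.take (m - u.length)) := by
  rw [take_append, height_append]

def reflect (w : List Bool) : List Bool := (w.map not).reverse

@[simp] lemma count_true_reflect (w : List Bool) : (reflect w).count true = w.count false := by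
  simpa [reflect] using count_map_of_injective w not Bool.not_injective false

@[simp] lemma count_false_reflect (w : List Bool) : (reflect w).count false = w.count true := by
  simpa [reflect] using count_map_of_injective w not Bool.not_injective true

@[simp] lemma height_reflect (w : List Bool) : height (reflect w) = -height w := by
  simp only [height, count_true_reflect, count_false_reflect]; ring

@[simp] lemma reflect_reflect (w : List Bool) : reflect (reflect w) = w := by
  simp [reflect, Function.comp_def]

lemma height_take_reflect (w : List Bool) (m : ℕ) :
    height ((reflect w).take m) = height (w.take (w.length - m)) - height w := by
  have hsplit := congrArg height (take_append_drop (w.length - m) w)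
  rw [reflect, take_reverse, length_map, ← map_drop, ← reflect, height_reflect]
  simp only [height_append] at hsplit
  linarith

def StaysAbove (c : ℤ) (w : List Bool) : Prop := ∀ m, c ≤ height (w.take m)

namespace StaysAbove

variable {c d : ℤ} {w : List Bool}

lemma le_height (h : StaysAbove c w) : c ≤ height w := by simpa using h w.length

lemma mono (h : StaysAbove c w) (hdc : d ≤ c) : StaysAbove d w := fun m => hdc.trans (h m)

lemma reflect (h : StaysAbove c w) : StaysAbove (c - height w) (DyckPath.reflect w) := by
  intro m
  rw [height_take_reflect]
  linarith [h (w.length - m)]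

end StaysAbove

lemma staysAbove_append_iff {c : ℤ} {u v : List Bool} :
    StaysAbove c (u ++ v) ↔ StaysAbove c u ∧ StaysAbove (c - height u) v := by
  refine ⟨fun h => ⟨fun m => ?_, fun m => ?_⟩, fun ⟨hu, hv⟩ m => ?_⟩
  · rcases le_total m u.length with hm | hm
    · simpa [take_append_of_le_length hm] using h m
    · simpa [take_of_length_le hm] using h u.length
  · have := h (u.length + m)
    rw [take_length_add_append, height_append] at this
    linarith
  · rw [height_take_append]
    rcases le_total m u.length with hm | hm
    · simpa [Nat.sub_eq_zero_of_le hm] using hu m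
    · rw [take_of_length_le hm]
      linarith [hv (m - u.length)]

lemma staysAbove_replicate_true (n : ℕ) : StaysAbove 0 (replicate n true) := by
  intro m
  simp [take_replicate]

lemma staysAbove_rise_falls {K : ℕ} (hK : 1 ≤ K) :
    StaysAbove (1 - K) (true :: replicate K false) := by
  rintro (_ | m)
  · simp only [take_zero, height_nil]
    omega
  · simp only [take_succ_cons, take_replicate, height_cons_true, height_replicate_false]
    omega

lemma isDyckWord_iff {w : List Bool} : IsDyckWord w ↔ StaysAbove 0 w ∧ height w = 0 := by
  have hpre : (∀ p, p <+: w → p.count false ≤ p.count true) ↔ StaysAbove 0 w := by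
    refine ⟨fun h m => ?_, fun h p hp => ?_⟩
    · simpa [height] using h _ (take_prefix m w)
    · rw [prefix_iff_eq_take.1 hp]
      simpa [height] using h p.length
  rw [IsDyckWord, hpre, height, sub_eq_zero, Nat.cast_inj, and_comm]

lemma isDyckWord_append_rise_falls_iff {u : List Bool} {K : ℕ} :
    IsDyckWord (u ++ true :: replicate K false) ↔ StaysAbove 0 u ∧ height u + 1 = K := by
  rw [isDyckWord_iff, staysAbove_append_iff]
  simp only [height_append, height_cons_true, height_replicate_false]
  refine ⟨fun ⟨⟨hu, _⟩, h⟩ => ⟨hu, by linarith⟩, fun ⟨hu, h⟩ => ⟨⟨hu, ?_⟩, by linarith⟩⟩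
  have hK : 1 ≤ K := by have := hu.le_height; omega
  exact (staysAbove_rise_falls hK).mono (by linarith)

lemma exists_eq_append_true_replicate_false {l : List Bool} (h : true ∈ l) :
    ∃ u K, l = u ++ true :: replicate K false := by
  induction l using List.reverseRecOn with
  | nil => simp at h
  | append_singleton l b ih =>
    cases b
    · obtain ⟨u, K, rfl⟩ := ih (by simpa using h)
      exact ⟨u, K + 1, by simp [replicate_succ']⟩
    · exact ⟨l, 0, rfl⟩

lemma exists_eq_replicate_true_append_false {l : List Bool} (h : false ∈ l) :
    ∃ a rest, l = replicate a true ++ false :: rest := by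
  induction l with
  | nil => simp at h
  | cons b l ih =>
    cases b
    · exact ⟨0, l, rfl⟩
    · obtain ⟨a, rest, rfl⟩ := ih (by simpa using h)
      exact ⟨a + 1, rest, rfl⟩

lemma replicate_true_prefix_iff {i a : ℕ} {rest : List Bool} :
    replicate i true <+: replicate a true ++ false :: rest ↔ i ≤ a := by
  induction i generalizing a with
  | zero => simp
  | succ i ih => cases a <;> simp [replicate_succ, ih]

def peakAt (w : List Bool) (k : ℕ) : Option ℕ :=
  if w[k]? = some true ∧ w[k + 1]? = some false then
    some ((w.take (k + 1)).count true - (w.take (k + 1)).count false)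
  else none

lemma peakHeights_eq_filterMap_peakAt (w : List Bool) :
    peakHeights w = (range w.length).filterMap (peakAt w) := rfl

lemma range_add_one_add (a m : ℕ) :
    range (a + 1 + m) = range a ++ a :: map (a + 1 + ·) (range m) := by
  rw [range_add, range_succ]; simp

lemma headI_peakHeights_replicate_append {a : ℕ} (ha : 1 ≤ a) (rest : List Bool) :
    (peakHeights (replicate a true ++ false :: rest)).headI = a := by
  obtain ⟨b, rfl⟩ : ∃ b, a = b + 1 := ⟨a - 1, by omega⟩
  set w := replicate (b + 1) true ++ false :: rest
  have hrise : ∀ k < b + 1, w[k]? = some true := fun k hk => by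
    rw [getElem?_append_left (by simpa using hk), getElem?_replicate_of_lt hk]
  have hfall : w[b + 1]? = some false := by
    rw [getElem?_append_right (by simp)]; simp
  have hlen : w.length = b + 1 + (1 + rest.length) := by
    simp only [length_append, length_replicate, length_cons, w]
    omega
  suffices h : (peakHeights w).head? = some (b + 1) by
    obtain ⟨t, ht⟩ := head?_eq_some_iff.1 h
    rw [ht, headI_cons]
  rw [peakHeights_eq_filterMap_peakAt, head?_filterMap, findSome?_eq_some_iff, hlen]
  refine ⟨range b, b, _, range_add_one_add _ _, ?_, fun k hk => ?_⟩
  · have htake : w.take (b + 1) = replicate (b + 1) true := by simp [w]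
    simp [peakAt, hrise b (by omega), hfall, htake, count_replicate]
  · have hk : k < b := mem_range.1 hk
    simp [peakAt, hrise (k + 1) (by omega)]

lemma getLast?_peakHeights_append_rise_falls (u : List Bool) {K : ℕ} (hK : 1 ≤ K) :
    (peakHeights (u ++ true :: replicate K false)).getLast? =
      some (u.count true + 1 - u.count false) := by
  set w := u ++ true :: replicate K false
  have hrise : w[u.length]? = some true := by
    rw [getElem?_append_right le_rfl]; simp
  have hfall : ∀ k < K, w[u.length + 1 + k]? = some false := fun k hk => by
    rw [getElem?_append_right (by omega), show u.length + 1 + k - u.length = k + 1 by omega]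
    simp [getElem?_replicate_of_lt hk]
  have hlen : w.length = u.length + 1 + K := by
    simp only [length_append, length_cons, length_replicate, w]
    omega
  rw [peakHeights_eq_filterMap_peakAt, getLast?_filterMap, findSome?_eq_some_iff, hlen,
    range_add_one_add]
  refine ⟨(map (u.length + 1 + ·) (range K)).reverse, u.length, (range u.length).reverse,
    by simp, ?_, fun x hx => ?_⟩
  · have htake : w.take (u.length + 1) = u ++ [true] := by simp [w, take_append]
    simp [peakAt, hrise, hfall 0 hK, htake]
  · obtain ⟨k, hk, rfl⟩ : ∃ k < K, u.length + 1 + k = x := by simpa using hx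
    simp [peakAt, hfall k hk]

lemma le_headI_peakHeights_iff {w : List Bool} (hw : IsDyckWord w) (hne : w ≠ []) {i : ℕ} :
    i ≤ (peakHeights w).headI ↔ replicate i true <+: w := by
  obtain ⟨hstay, hbal⟩ := isDyckWord_iff.1 hw
  have hfalse : false ∈ w := by
    by_contra h
    have hw' : w = replicate w.length true := eq_replicate_of_mem (by simpa using h)
    have hpos : 0 < w.length := length_pos_iff.2 hne
    rw [hw', height_replicate_true] at hbal
    omega
  obtain ⟨a, rest, rfl⟩ := exists_eq_replicate_true_append_false hfalse
  have ha : 1 ≤ a := by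
    by_contra ha
    obtain rfl : a = 0 := by omega
    simpa [height] using hstay 1
  rw [headI_peakHeights_replicate_append ha, replicate_true_prefix_iff]

/-- The Dyck paths of semilength `n` whose last peak has height `K`, stripped of their final
run `r fᴷ`. -/
def Trunk (n K : ℕ) : Set (List Bool) :=
  {u | StaysAbove 0 u ∧ u.count true + 1 = n ∧ height u + 1 = K}

def TouchingTrunk (n i j : ℕ) : Set (List Bool) :=
  {u | u ∈ Trunk n (j + 1) ∧ replicate i true <+: u ∧ ∃ p, p <+: u ∧ p ≠ [] ∧ height p = 0}

lemma setOf_getLast?_peakHeights_eq_image {n K : ℕ} (hn : 1 ≤ n) :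
    {w | IsDyckWord w ∧ w.count true = n ∧ (peakHeights w).getLast? = some K} =
      (· ++ true :: replicate K false) '' Trunk n K := by
  ext w
  constructor
  · rintro ⟨hw, rfl, hlast⟩
    obtain ⟨u, K', rfl⟩ :=
      exists_eq_append_true_replicate_false (count_pos_iff.1 (by omega : 0 < w.count true))
    obtain ⟨hu, hK'⟩ := isDyckWord_append_rise_falls_iff.1 hw
    rw [getLast?_peakHeights_append_rise_falls u (by have := hu.le_height; omega),
      Option.some_inj] at hlast
    obtain rfl : K' = K := by simp only [height] at hK'; omega
    exact ⟨u, ⟨hu, by simp [count_replicate], hK'⟩, rfl⟩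
  · rintro ⟨u, ⟨hu, hn, hK⟩, rfl⟩
    refine ⟨isDyckWord_append_rise_falls_iff.2 ⟨hu, hK⟩, by simpa [count_replicate] using hn, ?_⟩
    rw [getLast?_peakHeights_append_rise_falls u (by have := hu.le_height; omega)]
    simp only [height] at hK
    congr
    omega

lemma height_take_rise_falls {K k : ℕ} (hk : k ≤ K) :
    height ((true :: replicate K false).take (k + 1)) = 1 - k := by
  simp only [take_succ_cons, take_replicate, min_eq_left hk, height_cons_true,
    height_replicate_false]
  ring

lemma not_isPrimitiveWord_append_rise_falls_iff {u : List Bool} {K : ℕ} (hu : StaysAbove 0 u)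
    (hK : height u + 1 = K) :
    ¬ IsPrimitiveWord (u ++ true :: replicate K false) ↔
      ∃ p, p <+: u ∧ p ≠ [] ∧ height p = 0 := by
  simp only [IsPrimitiveWord, not_forall, not_lt, exists_prop]
  constructor
  · rintro ⟨p, hp, hne, hpw, hle⟩
    have hpt := prefix_iff_eq_take.1 hp
    rcases le_or_gt p.length u.length with hpu | hpu
    · rw [take_append_of_le_length hpu] at hpt
      refine ⟨p, hpt ▸ take_prefix _ _, hne, ?_⟩
      have := hu p.length
      rw [← hpt] at this
      simp only [height] at this ⊢
      omega
    · exfalso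
      obtain ⟨k, hk⟩ : ∃ k, p.length = u.length + (k + 1) := ⟨p.length - u.length - 1, by omega⟩
      have hkK : k < K := by
        by_contra hkK
        have := hp.length_le
        simp only [length_append, length_cons, length_replicate] at this
        exact hpw (hp.eq_of_length (by simp only [length_append, length_cons, length_replicate]; omega))
      have := congrArg height hpt
      rw [hk, take_length_add_append, height_append, height_take_rise_falls hkK.le] at this
      simp only [height] at this hK
      omega
  · rintro ⟨p, hp, hne, h0⟩
    refine ⟨p, hp.trans (prefix_append _ _), hne, fun h => ?_, ?_⟩
    · have := hp.length_le
      rw [h] at this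
      simp at this
    · simp only [height] at h0
      omega

lemma setOf_not_isPrimitiveWord_eq_image {n i j : ℕ} (hn : 1 ≤ n) (hi : i < n) :
    {w | IsDyckWord w ∧ w.count true = n ∧ ¬ IsPrimitiveWord w ∧
        (peakHeights w).getLast? = some (j + 1) ∧ i ≤ (peakHeights w).headI} =
      (· ++ true :: replicate (j + 1) false) '' TouchingTrunk n i j := by
  have key : ∀ u ∈ Trunk n (j + 1),
      (¬ IsPrimitiveWord (u ++ true :: replicate (j + 1) false) ∧
        i ≤ (peakHeights (u ++ true :: replicate (j + 1) false)).headI) ↔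
      (replicate i true <+: u ∧ ∃ p, p <+: u ∧ p ≠ [] ∧ height p = 0) := by
    rintro u ⟨hu, hn, hK⟩
    have hiu : i ≤ u.length := by have := count_le_length (a := true) (l := u); omega
    rw [not_isPrimitiveWord_append_rise_falls_iff hu hK,
      le_headI_peakHeights_iff (isDyckWord_append_rise_falls_iff.2 ⟨hu, hK⟩) (by simp),
      prefix_iff_eq_take, prefix_iff_eq_take (l₂ := u), length_replicate,
      take_append_of_le_length hiu, and_comm]
  ext w
  have hlast := Set.ext_iff.1 (setOf_getLast?_peakHeights_eq_image (K := j + 1) hn) w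
  simp only [Set.mem_ofPred_eq, Set.mem_image] at hlast ⊢
  constructor
  · rintro ⟨hw, hc, hprim, hl, hh⟩
    obtain ⟨u, hu, rfl⟩ := hlast.1 ⟨hw, hc, hl⟩
    exact ⟨u, ⟨hu, (key u hu).1 ⟨hprim, hh⟩⟩, rfl⟩
  · rintro ⟨u, ⟨hu, htouch⟩, rfl⟩
    obtain ⟨hw, hc, hl⟩ := hlast.2 ⟨u, hu, rfl⟩
    exact ⟨hw, hc, ((key u hu).2 htouch).1, hl, ((key u hu).2 htouch).2⟩

def StaysPositive (w : List Bool) : Prop := ∀ m, 0 < m → m ≤ w.length → 0 < height (w.take m)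

lemma StaysPositive.staysAbove {w : List Bool} (h : StaysPositive w) : StaysAbove 0 w := by
  intro m
  rw [take_eq_take_min]
  rcases Nat.eq_zero_or_pos (min m w.length) with h0 | hpos
  · simp [h0]
  · exact (h _ hpos (min_le_right _ _)).le

def lastLe (c : ℤ) (w : List Bool) : ℕ :=
  Nat.findGreatest (fun m => height (w.take m) ≤ c) w.length

lemma lastLe_append {c : ℤ} {A B : List Bool} (hA : height A = c) (hB : StaysPositive B) :
    lastLe c (A ++ B) = A.length := by
  rw [lastLe, Nat.findGreatest_eq_iff]
  refine ⟨by simp, fun _ => by simp [hA], fun m hm hmle => ?_⟩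
  obtain ⟨k, rfl⟩ : ∃ k, m = A.length + k := ⟨m - A.length, by omega⟩
  rw [take_length_add_append, height_append, hA, not_le]
  have := hB k (by omega) (by rw [length_append] at hmle; omega)
  linarith

lemma exists_eq_append_height_eq_staysPositive {c : ℤ} {w : List Bool} (hw : c < height w)
    (hc : ∃ m, height (w.take m) ≤ c) :
    ∃ A B, w = A ++ B ∧ height A = c ∧ StaysPositive B := by
  set M := lastLe c w
  have hlen : ∀ m, w.length ≤ m → ¬ height (w.take m) ≤ c := fun m hm => by
    rw [take_of_length_le hm]; omega
  obtain ⟨m, hm⟩ := hc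
  have hmw : m ≤ w.length := by
    by_contra h
    exact hlen m (by omega) hm
  have hM : height (w.take M) ≤ c :=
    Nat.findGreatest_spec (P := fun m => height (w.take m) ≤ c) hmw hm
  have hMw : M < w.length := lt_of_le_of_ne (Nat.findGreatest_le _) fun h => hlen M h.ge hM
  have hafter : ∀ k, 0 < k → M + k ≤ w.length → c < height (w.take (M + k)) := fun k hk hkw =>
    not_le.1 (Nat.findGreatest_is_greatest (P := fun m => height (w.take m) ≤ c)
      (show M < M + k by omega) hkw)
  refine ⟨w.take M, w.drop M, (take_append_drop M w).symm, ?_, fun k hk hkw => ?_⟩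
  · have := hafter 1 one_pos (by omega)
    have := height_take_add_one_le w M
    omega
  · have := hafter k hk (by rw [length_drop] at hkw; omega)
    rw [take_add, height_append] at this
    omega

def untouch (i : ℕ) (u : List Bool) : List Bool :=
  let v := u.drop i
  reflect (v.take (lastLe (-i) v)) ++ v.drop (lastLe (-i) v)

def touch (i : ℕ) (w : List Bool) : List Bool :=
  replicate i true ++ reflect (w.take (lastLe i w)) ++ w.drop (lastLe i w)

lemma untouch_eq {i : ℕ} {A B : List Bool} (hA : height A = -i) (hB : StaysPositive B) :
    untouch i (replicate i true ++ A ++ B) = reflect A ++ B := by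
  have hv : (replicate i true ++ A ++ B).drop i = A ++ B := by simp
  simp only [untouch, hv, lastLe_append hA hB, take_left, drop_left]

lemma touch_eq {i : ℕ} {A B : List Bool} (hA : height A = i) (hB : StaysPositive B) :
    touch i (A ++ B) = replicate i true ++ reflect A ++ B := by
  simp only [touch, lastLe_append hA hB, take_left, drop_left]

lemma exists_decomposition_of_mem_touchingTrunk {n i j : ℕ} (hj : 1 ≤ j) {u : List Bool}
    (hu : u ∈ TouchingTrunk n i j) :
    ∃ A B, u = replicate i true ++ A ++ B ∧ height A = -i ∧ StaysAbove (-i) A ∧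
      StaysPositive B := by
  obtain ⟨⟨hstay, -, hK⟩, ⟨v, rfl⟩, p, hp, hne, hp0⟩ := hu
  have hv : StaysAbove (-i) v := by simpa using (staysAbove_append_iff.1 hstay).2
  have hvh : -(i : ℤ) < height v := by
    simp only [height_append, height_replicate_true] at hK
    omega
  have hvm : ∃ m, height (v.take m) ≤ -i := by
    refine ⟨p.length - i, ?_⟩
    have hpt := congrArg height (prefix_iff_eq_take.1 hp)
    rw [height_take_append, take_replicate, height_replicate_true, length_replicate] at hpt
    have hpos : 0 < p.length := length_pos_iff.2 hne
    rcases le_or_gt i p.length with hip | hip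
    · omega
    · rw [Nat.sub_eq_zero_of_le hip.le, take_zero, height_nil] at hpt
      omega
  obtain ⟨A, B, rfl, hA, hB⟩ := exists_eq_append_height_eq_staysPositive hvh hvm
  exact ⟨A, B, (append_assoc _ _ _).symm, hA, (staysAbove_append_iff.1 hv).1, hB⟩

lemma exists_decomposition_of_mem_trunk {n i j : ℕ} (hj : 1 ≤ j) {w : List Bool}
    (hw : w ∈ Trunk n (i + j + 1)) :
    ∃ A B, w = A ++ B ∧ height A = i ∧ StaysAbove 0 A ∧ StaysPositive B := by
  obtain ⟨hstay, -, hK⟩ := hw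
  obtain ⟨A, B, rfl, hA, hB⟩ :=
    exists_eq_append_height_eq_staysPositive (c := i) (w := w) (by omega) ⟨0, by simp⟩
  exact ⟨A, B, rfl, hA, (staysAbove_append_iff.1 hstay).1, hB⟩

lemma untouch_mem_trunk {n i j : ℕ} (hj : 1 ≤ j) {u : List Bool}
    (hu : u ∈ TouchingTrunk n i j) : untouch i u ∈ Trunk n (i + j + 1) := by
  obtain ⟨A, B, rfl, hA, hAstay, hB⟩ := exists_decomposition_of_mem_touchingTrunk hj hu
  obtain ⟨⟨-, hn, hK⟩, -⟩ := hu
  rw [untouch_eq hA hB]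
  refine ⟨staysAbove_append_iff.2 ⟨?_, ?_⟩, ?_, ?_⟩
  · simpa [hA] using hAstay.reflect
  · exact hB.staysAbove.mono (by simp [hA])
  · simp only [height] at hA
    simp only [append_assoc, count_append, count_replicate_self, count_true_reflect] at hn ⊢
    omega
  · simp only [append_assoc, height_append, height_reflect, height_replicate_true, hA] at hK ⊢
    omega

lemma touch_mem_touchingTrunk {n i j : ℕ} (hi : 1 ≤ i) (hj : 1 ≤ j) {w : List Bool}
    (hw : w ∈ Trunk n (i + j + 1)) : touch i w ∈ TouchingTrunk n i j := by
  obtain ⟨A, B, rfl, hA, hAstay, hB⟩ := exists_decomposition_of_mem_trunk hj hw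
  obtain ⟨-, hn, hK⟩ := hw
  rw [touch_eq hA hB, append_assoc]
  refine ⟨⟨?_, ?_, ?_⟩, prefix_append _ _, replicate i true ++ reflect A, ?_, ?_, by simp [hA]⟩
  · rw [staysAbove_append_iff, staysAbove_append_iff]
    refine ⟨staysAbove_replicate_true i, by simpa [hA] using hAstay.reflect, ?_⟩
    exact hB.staysAbove.mono (by simp [hA])
  · simp only [height] at hA
    simp only [count_append, count_replicate_self, count_true_reflect] at hn ⊢
    omega
  · simp only [height_append, height_reflect, height_replicate_true, hA] at hK ⊢
    omega
  · rw [← append_assoc]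
    exact prefix_append _ _
  · simp only [ne_eq, append_eq_nil_iff, replicate_eq_nil_iff, not_and]
    omega

lemma untouch_touch {n i j : ℕ} (hj : 1 ≤ j) {w : List Bool} (hw : w ∈ Trunk n (i + j + 1)) :
    untouch i (touch i w) = w := by
  obtain ⟨A, B, rfl, hA, -, hB⟩ := exists_decomposition_of_mem_trunk hj hw
  rw [touch_eq hA hB, untouch_eq (by simp [hA]) hB, reflect_reflect]

lemma touch_untouch {n i j : ℕ} (hj : 1 ≤ j) {u : List Bool} (hu : u ∈ TouchingTrunk n i j) :
    touch i (untouch i u) = u := by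
  obtain ⟨A, B, rfl, hA, -, hB⟩ := exists_decomposition_of_mem_touchingTrunk hj hu
  rw [untouch_eq hA hB, touch_eq (by simp [hA]) hB, reflect_reflect]

lemma ncard_touchingTrunk {n i j : ℕ} (hi : 1 ≤ i) (hj : 1 ≤ j) :
    (TouchingTrunk n i j).ncard = (Trunk n (i + j + 1)).ncard :=
  (Set.InvOn.bijOn ⟨fun _ hu => touch_untouch hj hu, fun _ hw => untouch_touch hj hw⟩
    (fun _ hu => untouch_mem_trunk hj hu) (fun _ hw => touch_mem_touchingTrunk hi hj hw)).ncard_eq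

end DyckPath

theorem nonprimitive_tail_count (n : ℕ) (i j : ℕ)
    (hi : i ∈ Finset.Icc 1 (n - 1)) (hj : j ∈ Finset.Icc 1 (n - 1)) :
    {w : List Bool | IsDyckWord w ∧ w.count true = n ∧ ¬ IsPrimitiveWord w ∧
        (peakHeights w).getLast? = some (j + 1) ∧ i ≤ (peakHeights w).headI}.ncard =
      {w : List Bool | IsDyckWord w ∧ w.count true = n ∧
        (peakHeights w).getLast? = some (i + j + 1)}.ncard := by
  obtain ⟨hi1, hin⟩ := Finset.mem_Icc.1 hi
  have hj1 : 1 ≤ j := (Finset.mem_Icc.1 hj).1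
  rw [DyckPath.setOf_not_isPrimitiveWord_eq_image (by omega) (by omega),
    DyckPath.setOf_getLast?_peakHeights_eq_image (by omega),
    Set.ncard_image_of_injective _ (List.append_left_injective _),
    Set.ncard_image_of_injective _ (List.append_left_injective _)]
  exact DyckPath.ncard_touchingTrunk hi1 hj1
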